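/- arXiv:2312.16152 — 4 statements merged into one kernel-verified Lean document; each statement's English description precedes it below -/
import Mathlib

section
/- For i ∈ V_{n-1}, 1 ≤ r ≤ n−3, and ε ∈ {0,1}^r, one has p_ε(i) ≡ 1 (mod 2^n) if and only if i ≡ 1 (mod 2^{n-r}) and ε is the all-ones vector. -/
/-- The representative of `x` modulo `2^n` taken in `{1, …, 2^n}`. -/
def vmod (n : ℕ) (x : ℤ) : ℤ := (x - 1) % (2 ^ n) + 1

/-- The maps `p₀(i) = 2i mod 2^n` and `p₁(i) = 2i - 1 mod 2^n`; `j = true` codes `p₁`. -/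
def pmap (n : ℕ) (j : Bool) (i : ℤ) : ℤ :=
  if j then vmod n (2 * i - 1) else vmod n (2 * i)

/-- Composition `p_{ε₀} ∘ ⋯ ∘ p_{ε_{r-1}}` along a list `ε` of bits. -/
def pcomp (n : ℕ) : List Bool → ℤ → ℤ
  | [], i => i
  | e :: es, i => pmap n e (pcomp n es i)

/-!
Modulo `2^n`, `p_ε(i) = 2^r i - S` with `S = ∑ ε_j 2^j`. Reducing `2^r i - S ≡ 1` modulo `2^r`
gives `2^r ∣ S + 1`, which forces every bit of `S` to be `1`, i.e. `S = 2^r - 1`; the congruence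
then reads `2^r (i - 1) ≡ 0 [ZMOD 2^n]`, i.e. `i ≡ 1 [ZMOD 2^(n-r)]`.
-/

def bitsum : List Bool → ℤ
  | [] => 0
  | e :: es => (if e then 1 else 0) + 2 * bitsum es

lemma bitsum_eq_of_forall_eq_true {es : List Bool} (h : ∀ e ∈ es, e = true) :
    bitsum es = 2 ^ es.length - 1 := by
  induction es with
  | nil => rfl
  | cons e es ih =>
    simp only [List.forall_mem_cons] at h
    simp only [bitsum, h.1, ih h.2, if_true, List.length_cons, pow_succ]
    ring

lemma pow_length_dvd_bitsum_add_one_iff (es : List Bool) :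
    (2 : ℤ) ^ es.length ∣ bitsum es + 1 ↔ ∀ e ∈ es, e = true := by
  induction es with
  | nil => simp
  | cons e es ih =>
    rw [List.forall_mem_cons, ← ih, bitsum, List.length_cons, pow_succ']
    cases e
    · have hodd : ¬ (2 : ℤ) ∣ 0 + 2 * bitsum es + 1 := by omega
      simpa using fun h => hodd (dvd_of_mul_right_dvd h)
    · simp only [if_true, true_and]
      rw [show (1 : ℤ) + 2 * bitsum es + 1 = 2 * (bitsum es + 1) by ring,
        mul_dvd_mul_iff_left two_ne_zero]

lemma vmod_modEq (n : ℕ) (x : ℤ) : vmod n x ≡ x [ZMOD 2 ^ n] :=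
  calc (x - 1) % 2 ^ n + 1 ≡ x - 1 + 1 [ZMOD 2 ^ n] := (Int.mod_modEq _ _).add_right 1
    _ = x := sub_add_cancel x 1

lemma pmap_modEq (n : ℕ) (e : Bool) (i : ℤ) :
    pmap n e i ≡ 2 * i - (if e then 1 else 0) [ZMOD 2 ^ n] := by
  cases e <;> simp [pmap, vmod_modEq]

lemma pcomp_modEq (n : ℕ) (es : List Bool) (i : ℤ) :
    pcomp n es i ≡ 2 ^ es.length * i - bitsum es [ZMOD 2 ^ n] := by
  induction es with
  | nil => simp [pcomp, bitsum, Int.ModEq.refl]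
  | cons e es ih =>
    refine (pmap_modEq n e _).trans ?_
    convert ((ih.mul_left 2).sub_right (if e then 1 else 0)) using 1
    rw [bitsum, List.length_cons, pow_succ]
    ring

lemma pow_mul_sub_bitsum_modEq_one_iff {n : ℕ} {es : List Bool} (hn : es.length ≤ n) (i : ℤ) :
    2 ^ es.length * i - bitsum es ≡ 1 [ZMOD 2 ^ n] ↔
      i ≡ 1 [ZMOD 2 ^ (n - es.length)] ∧ ∀ e ∈ es, e = true := by
  have hpow : (2 : ℤ) ^ n = 2 ^ es.length * 2 ^ (n - es.length) := by
    rw [← pow_add, Nat.add_sub_cancel' hn]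
  have hcancel : (2 ^ es.length * i - (2 ^ es.length - 1) ≡ 1 [ZMOD 2 ^ n]) ↔
      i ≡ 1 [ZMOD 2 ^ (n - es.length)] := by
    rw [Int.modEq_iff_dvd, Int.modEq_iff_dvd, hpow,
      show 1 - (2 ^ es.length * i - (2 ^ es.length - 1)) = 2 ^ es.length * (1 - i) by ring,
      mul_dvd_mul_iff_left (by positivity)]
  constructor
  · intro h
    have hdvd : (2 : ℤ) ^ es.length ∣ bitsum es + 1 := by
      have := (Int.ModEq.of_mul_right _ (hpow ▸ h)).dvd.add (dvd_mul_right _ i)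
      rwa [show 1 - (2 ^ es.length * i - bitsum es) + 2 ^ es.length * i = bitsum es + 1 by ring]
        at this
    have hall := (pow_length_dvd_bitsum_add_one_iff es).mp hdvd
    rw [bitsum_eq_of_forall_eq_true hall] at h
    exact ⟨hcancel.mp h, hall⟩
  · rintro ⟨hi, hall⟩
    rw [bitsum_eq_of_forall_eq_true hall]
    exact hcancel.mpr hi

theorem stmt1_general (n r : ℕ) (hr2 : r ≤ n - 3)
    (ε : Fin r → Bool) (i : ℤ) :
    pcomp n (List.ofFn ε) i ≡ 1 [ZMOD (2 ^ n)] ↔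
      (i ≡ 1 [ZMOD (2 ^ (n - r))] ∧ ∀ j : Fin r, ε j = true) := by
  have hlen : (List.ofFn ε).length = r := List.length_ofFn
  have hmod := pcomp_modEq n (List.ofFn ε) i
  rw [Int.ModEq, hmod, ← Int.ModEq, pow_mul_sub_bitsum_modEq_one_iff (by omega), hlen,
    List.forall_mem_ofFn_iff]

theorem stmt1 (n r : ℕ) (hn : 4 ≤ n) (hr1 : 1 ≤ r) (hr2 : r ≤ n - 3)
    (ε : Fin r → Bool) (i : ℤ) (hi1 : 1 ≤ i) (hi2 : i ≤ 2 ^ (n - 1)) :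
    pcomp n (List.ofFn ε) i ≡ 1 [ZMOD (2 ^ n)] ↔
      (i ≡ 1 [ZMOD (2 ^ (n - r))] ∧ ∀ j : Fin r, ε j = true) :=
  stmt1_general n r hr2 ε i
end

section
/- Let x ∈ ℂ^{N+1} satisfy θ_n(x) = x, σ_0(x) = x, and σ_1(x) = x. Then E_3(x_1) = E_3(x_2) = ⋯ = E_3(x_8), i.e., all eight residue-class sums of coordinates modulo 8 are equal. -/
/-- The representative of `y` modulo `2^n` taken in `{1, …, 2^n}` (for `y ≥ 1`). -/
def vmodN (n y : ℕ) : ℕ := (y - 1) % 2 ^ n + 1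

/-- `E_3(x_j) = ∑_{1 ≤ s ≤ 2^(n-3)} x_{j + 8s}`, indices mod `2^n` in `{1, …, 2^n}`. -/
noncomputable def E3 (n : ℕ) (x : ℕ → ℂ) (j : ℕ) : ℂ :=
  ∑ s ∈ Finset.Icc 1 (2 ^ (n - 3)), x (vmodN n (j + 8 * s))

/-!
The three symmetries act on the index set `{1, …, 8M}` (with `8M = 2^n`) and each of them maps
residue classes mod 8 onto residue classes mod 8: `σ_0` swaps the classes `2k - 1 ↔ 2k`, `σ_1`
swaps `1 ↔ 3` and `5 ↔ 7`, and the reflection `θ` swaps `j ↔ 9 - j`, in particular `2 ↔ 7`.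
A fixed vector therefore has equal sums over the classes exchanged by these moves, and the
moves connect all eight classes.
-/

open Finset

theorem sum_Icc_one_mod {α : Type*} [AddCommMonoid α] (f : ℕ → α) {M : ℕ} (hM : 0 < M) :
    ∑ s ∈ Icc 1 M, f (s % M) = ∑ s ∈ range M, f s := by
  refine sum_nbij' (· % M) (fun s => if s = 0 then M else s) ?_ ?_ ?_ ?_ (fun _ _ => rfl)
  · intro s _
    simpa using Nat.mod_lt s hM
  · intro s hs
    simp only [mem_range, mem_Icc] at hs ⊢
    split_ifs <;> omega
  · intro s hs
    simp only [mem_Icc] at hs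
    rcases hs.2.lt_or_eq with h | rfl
    · simp only [Nat.mod_eq_of_lt h]
      split_ifs <;> omega
    · simp
  · intro s hs
    simp only [mem_range] at hs
    split_ifs <;> simp [Nat.mod_eq_of_lt, *]

theorem two_pow_eq_eight_mul {n : ℕ} (hn : 3 ≤ n) : 2 ^ n = 8 * 2 ^ (n - 3) := by
  rw [show 8 = 2 ^ 3 by rfl, ← pow_add, Nat.add_sub_cancel' hn]

theorem vmodN_add_eight_mul {n M j : ℕ} (hN : 2 ^ n = 8 * M) (hj1 : 1 ≤ j) (hj8 : j ≤ 8)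
    (s : ℕ) : vmodN n (j + 8 * s) = 8 * (s % M) + j := by
  have hdiv : (j + 8 * s - 1) / 8 = s := by omega
  rw [vmodN, hN, Nat.mod_mul, hdiv]
  omega

def residueSum {α : Type*} [AddCommMonoid α] (x : ℕ → α) (M j : ℕ) : α :=
  ∑ s ∈ range M, x (8 * s + j)

theorem E3_eq_residueSum {n : ℕ} (hn : 3 ≤ n) (x : ℕ → ℂ) {j : ℕ} (hj1 : 1 ≤ j) (hj8 : j ≤ 8) :
    E3 n x j = residueSum x (2 ^ (n - 3)) j := by
  simp only [E3, vmodN_add_eight_mul (two_pow_eq_eight_mul hn) hj1 hj8]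
  exact sum_Icc_one_mod (fun s => x (8 * s + j)) (Nat.two_pow_pos _)

section ResidueSum

variable {α : Type*} [AddCommMonoid α] {x : ℕ → α} {M : ℕ}

theorem residueSum_eq_succ_of_pair_swap
    (hσ0 : ∀ i, 1 ≤ i → 2 * i ≤ 8 * M → x (2 * i - 1) = x (2 * i))
    {j : ℕ} (hj : j % 2 = 1) (hj7 : j ≤ 7) :
    residueSum x M j = residueSum x M (j + 1) := by
  refine sum_congr rfl fun s hs => ?_
  have hs : s < M := mem_range.mp hs
  have h := hσ0 ((8 * s + j + 1) / 2) (by omega) (by omega)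
  rwa [show 2 * ((8 * s + j + 1) / 2) - 1 = 8 * s + j by omega,
    show 2 * ((8 * s + j + 1) / 2) = 8 * s + (j + 1) by omega] at h

theorem residueSum_eq_add_two_of_block_swap
    (hσ1 : ∀ j, 1 ≤ j → j ≤ 8 * M → (j % 4 = 1 ∨ j % 4 = 2) → x j = x (j + 2))
    {j : ℕ} (hj : j % 4 = 1 ∨ j % 4 = 2) (hj6 : j ≤ 6) :
    residueSum x M j = residueSum x M (j + 2) :=
  sum_congr rfl fun s hs => by
    have hs : s < M := mem_range.mp hs
    exact hσ1 (8 * s + j) (by omega) (by omega) (by omega)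

theorem residueSum_eq_nine_sub_of_reflect
    (hθ : ∀ i, 1 ≤ i → i ≤ 8 * M → x i = x (8 * M - i + 1))
    {j : ℕ} (hj1 : 1 ≤ j) (hj8 : j ≤ 8) :
    residueSum x M j = residueSum x M (9 - j) := by
  rw [residueSum, ← sum_range_reflect]
  refine sum_congr rfl fun s hs => ?_
  have hs : s < M := mem_range.mp hs
  rw [hθ _ (by omega) (by omega)]
  congr 1
  omega

theorem residueSum_eq_residueSum_one
    (hθ : ∀ i, 1 ≤ i → i ≤ 8 * M → x i = x (8 * M - i + 1))
    (hσ0 : ∀ i, 1 ≤ i → 2 * i ≤ 8 * M → x (2 * i - 1) = x (2 * i))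
    (hσ1 : ∀ j, 1 ≤ j → j ≤ 8 * M → (j % 4 = 1 ∨ j % 4 = 2) → x j = x (j + 2))
    {j : ℕ} (hj1 : 1 ≤ j) (hj8 : j ≤ 8) :
    residueSum x M j = residueSum x M 1 := by
  have e12 := residueSum_eq_succ_of_pair_swap hσ0 (j := 1) rfl (by norm_num)
  have e34 := residueSum_eq_succ_of_pair_swap hσ0 (j := 3) rfl (by norm_num)
  have e56 := residueSum_eq_succ_of_pair_swap hσ0 (j := 5) rfl (by norm_num)
  have e78 := residueSum_eq_succ_of_pair_swap hσ0 (j := 7) rfl (by norm_num)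
  have e13 := residueSum_eq_add_two_of_block_swap hσ1 (j := 1) (by norm_num) (by norm_num)
  have e57 := residueSum_eq_add_two_of_block_swap hσ1 (j := 5) (by norm_num) (by norm_num)
  have e27 := residueSum_eq_nine_sub_of_reflect hθ (j := 2) (by norm_num) (by norm_num)
  interval_cases j <;> simp_all

end ResidueSum

theorem stmt16 (n : ℕ) (hn : 3 ≤ n) (x : ℕ → ℂ)
    (hθ : ∀ i, 1 ≤ i → i ≤ 2 ^ n → x i = x (2 ^ n - i + 1))
    (hσ0 : ∀ i, 1 ≤ i → 2 * i ≤ 2 ^ n → x (2 * i - 1) = x (2 * i))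
    (hσ1 : ∀ j, 1 ≤ j → j ≤ 2 ^ n → (j % 4 = 1 ∨ j % 4 = 2) → x j = x (j + 2)) :
    ∀ i j, 1 ≤ i → i ≤ 8 → 1 ≤ j → j ≤ 8 → E3 n x i = E3 n x j := by
  intro i j hi1 hi8 hj1 hj8
  rw [two_pow_eq_eight_mul hn] at hθ hσ0 hσ1
  rw [E3_eq_residueSum hn x hi1 hi8, E3_eq_residueSum hn x hj1 hj8,
    residueSum_eq_residueSum_one hθ hσ0 hσ1 hi1 hi8,
    residueSum_eq_residueSum_one hθ hσ0 hσ1 hj1 hj8]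
end

section
/- If x ∈ ℂ^{N+1} satisfies θ_n(x) = x (x_i = x_{2^n−i+1} for 1 ≤ i ≤ 2^n, x_0 fixed), then Y^n(x) − X^n(x) = x_0 · (E_2(x_1 − x_3))², where Y^n − X^n = x_0·E_2(x_1x_4 + x_2x_3 − x_1x_2 − x_3x_4) and E_2(x_j) = ∑_{k ≡ j (mod 4)} x_k. -/
/-- `E_2(x_j) = ∑_{1 ≤ s ≤ 2^(n-2)} x_{j + 4s}`, indices mod `2^n` in `{1, …, 2^n}`. -/
noncomputable def E2 (n : ℕ) (x : ℕ → ℂ) (j : ℕ) : ℂ :=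
  ∑ s ∈ Finset.Icc 1 (2 ^ (n - 2)), x (vmodN n (j + 4 * s))

/-! The reflection `i ↦ 2^n - i + 1` maps the residue class of `j` modulo 4 onto that of
`5 - j`, so for `θ_n`-invariant `x` we get `E_2(x_4) = E_2(x_1)` and `E_2(x_2) = E_2(x_3)`;
the identity is then `(a - b)(a - b) = (a - b)²` with `a = E_2(x_1)`, `b = E_2(x_3)`. -/

open Finset

lemma vmodN_of_le {n y : ℕ} (h1 : 1 ≤ y) (h2 : y ≤ 2 ^ n) : vmodN n y = y := by
  rw [vmodN, Nat.mod_eq_of_lt (show y - 1 < 2 ^ n by omega)]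
  omega

lemma vmodN_add_two_pow {n y : ℕ} (h : 1 ≤ y) : vmodN n (y + 2 ^ n) = vmodN n y := by
  rw [vmodN, vmodN, Nat.sub_add_comm h, Nat.add_mod_right]

lemma E2_eq_sum_range (m : ℕ) (x : ℕ → ℂ) {j : ℕ} (hj1 : 1 ≤ j) (hj4 : j ≤ 4) :
    E2 (m + 2) x j = ∑ t ∈ range (2 ^ m), x (j + 4 * t) := by
  set g : ℕ → ℂ := fun t ↦ x (vmodN (m + 2) (j + 4 * t))
  have hN : 2 ^ (m + 2) = 4 * 2 ^ m := by ring
  -- the summand is periodic with period `2^m`, so shifting the range `Icc 1 (2^m)` to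
  -- `range (2^m)` does not change the sum
  have hperiod : g (2 ^ m) = g 0 := by
    simp only [g, mul_zero, add_zero, ← hN, vmodN_add_two_pow hj1]
  have hshift : ∑ t ∈ range (2 ^ m), g (t + 1) = ∑ t ∈ range (2 ^ m), g t := by
    have h₁ := sum_range_succ g (2 ^ m)
    have h₂ := sum_range_succ' g (2 ^ m)
    rw [hperiod] at h₁
    linear_combination h₁ - h₂
  calc E2 (m + 2) x j = ∑ s ∈ Ico 1 (2 ^ m + 1), g s := by rw [Ico_add_one_right_eq_Icc]; rfl
    _ = ∑ t ∈ range (2 ^ m), g (t + 1) := by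
      simp only [sum_Ico_eq_sum_range, Nat.add_sub_cancel, add_comm 1]
    _ = ∑ t ∈ range (2 ^ m), x (j + 4 * t) := by
      rw [hshift]
      refine sum_congr rfl fun t ht ↦ ?_
      rw [mem_range] at ht
      simp only [g, vmodN_of_le (by omega : 1 ≤ j + 4 * t) (by omega : j + 4 * t ≤ 2 ^ (m + 2))]

lemma E2_reflect (m : ℕ) (x : ℕ → ℂ)
    (hθ : ∀ i, 1 ≤ i → i ≤ 2 ^ (m + 2) → x i = x (2 ^ (m + 2) - i + 1))
    {j : ℕ} (hj1 : 1 ≤ j) (hj4 : j ≤ 4) :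
    E2 (m + 2) x (5 - j) = E2 (m + 2) x j := by
  have hN : 2 ^ (m + 2) = 4 * 2 ^ m := by ring
  rw [E2_eq_sum_range m x (by omega) (by omega), E2_eq_sum_range m x hj1 hj4,
    ← sum_range_reflect (fun t ↦ x (j + 4 * t))]
  refine sum_congr rfl fun t ht ↦ ?_
  rw [mem_range] at ht
  rw [hθ _ (by omega) (by omega)]
  congr 1
  omega

/-- If `θ_n(x) = x`, then `Y^n(x) - X^n(x) = x_0 · (E_2(x_1 - x_3))²`.
Here `Y^n - X^n = x_0 · E_2(x_1 x_4 + x_2 x_3 - x_1 x_2 - x_3 x_4)`,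
with `E_2` a ring homomorphism, so the left side evaluates to the displayed
combination of the residue-class sums `E_2(x_j)`. -/
theorem stmt18 (n : ℕ) (hn : 3 ≤ n) (x : ℕ → ℂ)
    (hθ : ∀ i, 1 ≤ i → i ≤ 2 ^ n → x i = x (2 ^ n - i + 1)) :
    x 0 * (E2 n x 1 * E2 n x 4 + E2 n x 2 * E2 n x 3
        - E2 n x 1 * E2 n x 2 - E2 n x 3 * E2 n x 4)
      = x 0 * (E2 n x 1 - E2 n x 3) ^ 2 := by
  obtain ⟨m, rfl⟩ : ∃ m, n = m + 2 := ⟨n - 2, by omega⟩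
  have h41 : E2 (m + 2) x 4 = E2 (m + 2) x 1 := E2_reflect m x hθ le_rfl (by norm_num)
  have h23 : E2 (m + 2) x 2 = E2 (m + 2) x 3 :=
    E2_reflect m x hθ (j := 3) (by norm_num) (by norm_num)
  rw [h41, h23]
  ring
end

section
/- Let G be a connected rank-m uniform hypergraph with principal eigenpair (λ_G, v), where v is the unique maximizer of the Lagrangian F_G on the positive part of the ℓ_m unit sphere. Then G is regular (all vertex degrees equal) if and only if v is a positive scalar multiple of the all-ones vector. -/
/-!
By AM–GM on each edge, `F_G(x) ≤ (1/m) ∑_k deg(k) x_k^m` for `x ≥ 0`, with equality at constant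
vectors. If `G` is regular the right-hand side equals `deg/m` on the sphere, so the constant unit
vector is a maximizer and uniqueness forces `v` to be constant. Conversely, Fermat's rule along
curves of the sphere gives the eigenvalue equations `G[i](v) v_j^{m-1} = G[j](v) v_i^{m-1}`, and at a
constant vector `G[i] = deg(i) c^{m-1}`, so all degrees agree.
-/

open Finset

/-- The Lagrangian `F_G(x) = ∑_{e ∈ E} ∏_{i ∈ e} x_i` of a hypergraph with edge set `E`. -/
def lagrangian {n : ℕ} (E : Finset (Finset (Fin n))) (x : Fin n → ℝ) : ℝ :=
  ∑ e ∈ E, ∏ i ∈ e, x i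

/-- A hypergraph (given by its edge set) is connected: any two vertices are joined
by a chain of overlapping edges. -/
def HConnected {n : ℕ} (E : Finset (Finset (Fin n))) : Prop :=
  ∀ i j : Fin n, Relation.ReflTransGen (fun a b => ∃ e ∈ E, a ∈ e ∧ b ∈ e) i j

/-- The degree of vertex `i`: the number of edges containing `i`. -/
def hdeg {n : ℕ} (E : Finset (Finset (Fin n))) (i : Fin n) : ℕ :=
  (E.filter fun e => i ∈ e).card

theorem Real.prod_le_sum_pow_card_div {ι : Type*} {s : Finset ι} (hs : s.Nonempty) {x : ι → ℝ}
    (hx : ∀ i ∈ s, 0 ≤ x i) :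
    ∏ i ∈ s, x i ≤ ∑ i ∈ s, x i ^ s.card / s.card := by
  have hcard : s.card ≠ 0 := hs.card_pos.ne'
  have := Real.geom_mean_le_arith_mean_weighted s (fun _ => ((s.card : ℕ) : ℝ)⁻¹)
    (fun i => x i ^ s.card) (fun _ _ => by positivity) (by simp [hcard])
    (fun i hi => pow_nonneg (hx i hi) _)
  calc ∏ i ∈ s, x i = ∏ i ∈ s, (x i ^ s.card) ^ ((s.card : ℕ) : ℝ)⁻¹ :=
        Finset.prod_congr rfl fun i hi => (Real.pow_rpow_inv_natCast (hx i hi) hcard).symm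
    _ ≤ _ := this
    _ = _ := by simp only [inv_mul_eq_div]

theorem Real.pow_rpow_inv_natCast_sub_one {a : ℝ} (ha : 0 < a) {m : ℕ} (hm : m ≠ 0) :
    (a ^ m) ^ ((m : ℝ)⁻¹ - 1) = (a ^ (m - 1))⁻¹ := by
  rw [← Real.rpow_natCast_mul ha.le, ← Real.rpow_natCast, ← Real.rpow_neg ha.le,
    Nat.cast_sub (Nat.one_le_iff_ne_zero.2 hm)]
  congr 1
  field_simp
  ring

section Lagrangian

variable {n m : ℕ} (E : Finset (Finset (Fin n)))

/-- The partial derivative `G[i](x) = ∂F_G/∂x_i` of the Lagrangian. -/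
def lagrangianPartial (x : Fin n → ℝ) (i : Fin n) : ℝ :=
  ∑ e ∈ E.filter (i ∈ ·), ∏ k ∈ e.erase i, x k

theorem sum_sum_mem_eq_sum_sum_filter (g : Finset (Fin n) → Fin n → ℝ) :
    ∑ e ∈ E, ∑ k ∈ e, g e k = ∑ k, ∑ e ∈ E.filter (k ∈ ·), g e k :=
  Finset.sum_comm' (by simp [and_comm])

theorem sum_sum_mem_eq_sum_hdeg_mul (f : Fin n → ℝ) :
    ∑ e ∈ E, ∑ k ∈ e, f k = ∑ k, (hdeg E k : ℝ) * f k := by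
  simp [sum_sum_mem_eq_sum_sum_filter, hdeg]

variable {E}

theorem lagrangian_le_sum_hdeg_mul_pow (hm : m ≠ 0) (hrank : ∀ e ∈ E, e.card = m)
    {x : Fin n → ℝ} (hx : ∀ i, 0 ≤ x i) :
    lagrangian E x ≤ ∑ k, (hdeg E k : ℝ) * (x k ^ m / m) := by
  rw [← sum_sum_mem_eq_sum_hdeg_mul]
  refine Finset.sum_le_sum fun e he => ?_
  have hne : e.Nonempty := Finset.card_pos.1 (by rw [hrank e he]; omega)
  have := Real.prod_le_sum_pow_card_div hne fun i _ => hx i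
  rwa [hrank e he] at this

theorem lagrangian_const (hm : m ≠ 0) (hrank : ∀ e ∈ E, e.card = m) (c : ℝ) :
    lagrangian E (fun _ => c) = ∑ k, (hdeg E k : ℝ) * (c ^ m / m) := by
  rw [← sum_sum_mem_eq_sum_hdeg_mul, lagrangian]
  refine Finset.sum_congr rfl fun e he => ?_
  rw [Finset.prod_const, Finset.sum_const, hrank e he, nsmul_eq_mul]
  field_simp

theorem lagrangianPartial_const (hrank : ∀ e ∈ E, e.card = m) (c : ℝ) (i : Fin n) :
    lagrangianPartial E (fun _ => c) i = hdeg E i * c ^ (m - 1) := by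
  rw [lagrangianPartial, hdeg, Finset.sum_congr rfl fun e he => ?_, Finset.sum_const,
    nsmul_eq_mul]
  rw [Finset.mem_filter] at he
  rw [Finset.prod_const, Finset.card_erase_of_mem he.2, hrank e he.1]

theorem hasDerivAt_lagrangian {X : ℝ → Fin n → ℝ} {X' : Fin n → ℝ} {t : ℝ}
    (hX : ∀ k, HasDerivAt (fun s => X s k) (X' k) t) :
    HasDerivAt (fun s => lagrangian E (X s)) (∑ k, lagrangianPartial E (X t) k * X' k) t := by
  exact (HasDerivAt.fun_sum fun e _ => HasDerivAt.fun_finsetProd fun k _ => hX k).congr_deriv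
    (by simp only [smul_eq_mul, sum_sum_mem_eq_sum_sum_filter, lagrangianPartial, sum_mul])

open Filter Topology in
theorem lagrangianPartial_mul_pow_eq_of_isMax (hm : m ≠ 0) {v : Fin n → ℝ} (hv : ∀ i, 0 < v i)
    (hv_unit : ∑ i, v i ^ m = 1)
    (hmax : ∀ x : Fin n → ℝ, (∀ i, 0 ≤ x i) → ∑ i, x i ^ m = 1 → lagrangian E x ≤ lagrangian E v)
    (i j : Fin n) :
    lagrangianPartial E v i * v j ^ (m - 1) = lagrangianPartial E v j * v i ^ (m - 1) := by
  -- `X t` runs on the sphere through `v` (its `m`-th powers move along `w`, and `∑ w = 0`),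
  -- so `t = 0` is an interior maximum of `F_G ∘ X`.
  set w : Fin n → ℝ := Pi.single i 1 - Pi.single j 1
  set X : ℝ → Fin n → ℝ := fun t k => (v k ^ m + t * w k) ^ (m : ℝ)⁻¹
  have hX0 : X 0 = v := funext fun k => by simp [X, Real.pow_rpow_inv_natCast (hv k).le hm]
  have hderiv (k : Fin n) :
      HasDerivAt (fun t => X t k) (w k * (m : ℝ)⁻¹ * (v k ^ m) ^ ((m : ℝ)⁻¹ - 1)) 0 := by
    simpa using ((hasDerivAt_mul_const (w k)).const_add (v k ^ m)).rpow_const (x := 0)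
      (p := (m : ℝ)⁻¹) (Or.inl (by simpa using (pow_pos (hv k) m).ne'))
  have hlocal : IsLocalMax (fun t => lagrangian E (X t)) 0 := by
    have hbase : ∀ᶠ t in 𝓝 0, ∀ k, 0 ≤ v k ^ m + t * w k := by
      refine eventually_all.2 fun k => ?_
      have : Tendsto (fun t : ℝ => v k ^ m + t * w k) (𝓝 0) (𝓝 (v k ^ m + 0 * w k)) :=
        Continuous.tendsto (by fun_prop) 0
      exact (this.eventually_const_lt (by simpa using pow_pos (hv k) m)).mono fun _ => le_of_lt
    filter_upwards [hbase] with t ht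
    rw [hX0]
    refine hmax _ (fun k => Real.rpow_nonneg (ht k) _) ?_
    rw [Finset.sum_congr rfl fun k _ => Real.rpow_inv_natCast_pow (ht k) hm,
      Finset.sum_add_distrib, ← Finset.mul_sum, hv_unit]
    simp [w]
  have hcrit := hlocal.hasDerivAt_eq_zero (hasDerivAt_lagrangian hderiv)
  rw [hX0] at hcrit
  simp only [w, Pi.sub_apply, Pi.single_apply, sub_mul, ite_mul, one_mul, zero_mul, mul_sub,
    mul_ite, mul_zero, sum_sub_distrib, sum_ite_eq', mem_univ, if_true,
    Real.pow_rpow_inv_natCast_sub_one (hv _) hm] at hcrit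
  have hi := (pow_pos (hv i) (m - 1)).ne'
  have hj := (pow_pos (hv j) (m - 1)).ne'
  field_simp at hcrit
  linarith

end Lagrangian

theorem stmt19_general (n m : ℕ) (hn : 1 ≤ n) (hm : 2 ≤ m) (E : Finset (Finset (Fin n)))
    (hrank : ∀ e ∈ E, e.card = m)
    (v : Fin n → ℝ)
    (hv_pos : ∀ i, 0 < v i)
    (hv_unit : ∑ i, v i ^ m = 1)
    (hmax : ∀ x : Fin n → ℝ, (∀ i, 0 ≤ x i) → ∑ i, x i ^ m = 1 →
      lagrangian E x ≤ lagrangian E v)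
    (huniq : ∀ x : Fin n → ℝ, (∀ i, 0 < x i) → ∑ i, x i ^ m = 1 →
      lagrangian E x = lagrangian E v → x = v) :
    (∀ i j : Fin n, hdeg E i = hdeg E j) ↔
      ∃ c : ℝ, 0 < c ∧ v = fun _ => c := by
  have hm0 : m ≠ 0 := by omega
  constructor
  · intro hreg
    set c : ℝ := (n : ℝ)⁻¹ ^ (m : ℝ)⁻¹
    have hc : 0 < c := by positivity
    have hc_unit : ∑ _k : Fin n, c ^ m = 1 := by
      have hn0 : (n : ℝ) ≠ 0 := by exact_mod_cast (by omega : n ≠ 0)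
      simp [c, Real.rpow_inv_natCast_pow, hm0, hn0]
    have hsum (x : Fin n → ℝ) (hx : ∑ k, x k ^ m = 1) :
        ∑ k, (hdeg E k : ℝ) * (x k ^ m / m) = hdeg E ⟨0, hn⟩ / m := by
      simp_rw [hreg _ ⟨0, hn⟩, ← Finset.mul_sum, ← Finset.sum_div, hx, mul_one_div]
    have hopt : lagrangian E v ≤ lagrangian E (fun _ => c) := by
      rw [lagrangian_const hm0 hrank, hsum _ hc_unit, ← hsum _ hv_unit]
      exact lagrangian_le_sum_hdeg_mul_pow hm0 hrank fun k => (hv_pos k).le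
    have hmax_c := hmax _ (fun _ => hc.le) hc_unit
    exact ⟨c, hc, (huniq _ (fun _ => hc) hc_unit (hmax_c.antisymm hopt)).symm⟩
  · rintro ⟨c, hc, rfl⟩ i j
    have heig := lagrangianPartial_mul_pow_eq_of_isMax hm0 (fun _ => hc) hv_unit hmax i j
    simp only [lagrangianPartial_const hrank] at heig
    have hcm := (pow_pos hc (m - 1)).ne'
    exact_mod_cast mul_right_cancel₀ hcm (mul_right_cancel₀ hcm heig)

theorem stmt19 (n m : ℕ) (hn : 1 ≤ n) (hm : 2 ≤ m) (E : Finset (Finset (Fin n)))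
    (hrank : ∀ e ∈ E, e.card = m) (hconn : HConnected E)
    (lam : ℝ) (v : Fin n → ℝ)
    (hv_pos : ∀ i, 0 < v i)
    (hv_unit : ∑ i, v i ^ m = 1)
    (hlam : lam = lagrangian E v)
    (hmax : ∀ x : Fin n → ℝ, (∀ i, 0 ≤ x i) → ∑ i, x i ^ m = 1 →
      lagrangian E x ≤ lagrangian E v)
    (huniq : ∀ x : Fin n → ℝ, (∀ i, 0 < x i) → ∑ i, x i ^ m = 1 →
      lagrangian E x = lagrangian E v → x = v) :
    (∀ i j : Fin n, hdeg E i = hdeg E j) ↔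
      ∃ c : ℝ, 0 < c ∧ v = fun _ => c :=
  stmt19_general n m hn hm E hrank v hv_pos hv_unit hmax huniq
end
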